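/- arXiv:1802.08892 — 5 statements merged into one kernel-verified Lean document; each statement's English description precedes it below -/
import Mathlib

section
/- Let V be a vector space over a field 𝔽, n ≥ 2, f an n-linear map on V, and ℬ a basis of V. If (X₁, X₂, …, X_{m-1}, X_m) is a connection from e_i to e_j, where e_i, e_j ∈ ℬ with e_i ≠ e_j, then the reversed, bar-swapped list (X̄_m, X̄_{m-1}, …, X̄₂, X̄₁) is a connection from e_j to e_i, where X̄_t denotes the tuple obtained from X_t by applying the bar-swap to each entry. -/
/- Common setting: `V` is a vector space over a field `𝔽`, and `f` is an
`n`-linear map on `V` where `n = m + 1 ≥ 2` (i.e. `1 ≤ m`).  Tuples of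
length `n - 1 = m` index the last arguments of the set-valued map `F`. -/

open scoped Classical

noncomputable section

variable {𝔽 V I : Type*}

/-- The set `V* = V \ {0}` of nonzero vectors. -/
abbrev Vstar (V : Type*) [Zero V] := {v : V // v ≠ 0}

/-- The disjoint union `ℬ ∪̇ ℬ̄`, encoded by indices: `(false, i)` stands for the
basis vector `e i ∈ ℬ` and `(true, i)` for the formal bar symbol `ē i ∈ ℬ̄`. -/
abbrev BSym (I : Type*) := Bool × I

/-- The bar-swap on `ℬ ∪̇ ℬ̄`. -/
def barSwap {I : Type*} (s : BSym I) : BSym I := (!s.1, s.2)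

variable [Field 𝔽] [AddCommGroup V] [Module 𝔽 V] {m : ℕ}

/-- A basis vector, as an element of `V*`. -/
def bstar (b : Module.Basis I 𝔽 V) (i : I) : Vstar V := ⟨b i, b.ne_zero i⟩

/-- The set-valued map `F : 𝒫(V*) × (ℬ ∪̇ ℬ̄)^{n-1} → 𝒫(V*)` associated to the
`n`-linear map `f` and the basis `b` (here `n = m + 1`). -/
def Fmap (b : Module.Basis I 𝔽 V) (f : MultilinearMap 𝔽 (fun _ : Fin (m + 1) => V) V)
    (U : Set (Vstar V)) (ξ : Fin m → BSym I) : Set (Vstar V) :=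
  if ∀ t, (ξ t).1 = false then
    {w | ∃ (k : Fin (m + 1)) (σ : Equiv.Perm (Fin m)), ∃ u ∈ U,
      f (Fin.insertNth k u.1 fun t => b (ξ (σ t)).2) = w.1}
  else if ∀ t, (ξ t).1 = true then
    {w | ∃ (k : Fin (m + 1)) (σ : Equiv.Perm (Fin m)), ∃ u ∈ U,
      f (Fin.insertNth k w.1 fun t => b (ξ (σ t)).2) = u.1}
  else ∅

/-- Iterated application of `F` along a list of `(n-1)`-tuples. -/
def iterF (b : Module.Basis I 𝔽 V) (f : MultilinearMap 𝔽 (fun _ : Fin (m + 1) => V) V) :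
    Set (Vstar V) → List (Fin m → BSym I) → Set (Vstar V)
  | U, [] => U
  | U, X :: Xs => iterF b f (Fmap b f U X) Xs

/-- `X` is a connection from `e i` to `e j`.  (Since `F(∅,⋯) = ∅`, the requirement
that all intermediate iterated images are nonempty is equivalent to the final
image containing `e j`.) -/
def IsConnection (b : Module.Basis I 𝔽 V) (f : MultilinearMap 𝔽 (fun _ : Fin (m + 1) => V) V)
    (i j : I) (X : List (Fin m → BSym I)) : Prop :=
  X ≠ [] ∧ bstar b j ∈ iterF b f {bstar b i} X

/-- `e i` is connected to `e j`. -/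
def Connected (b : Module.Basis I 𝔽 V) (f : MultilinearMap 𝔽 (fun _ : Fin (m + 1) => V) V)
    (i j : I) : Prop :=
  i = j ∨ ∃ X : List (Fin m → BSym I), IsConnection b f i j X

/-- Two subspaces `W₁, W₂` are `f`-orthogonal. -/
def FOrthogonal (f : MultilinearMap 𝔽 (fun _ : Fin (m + 1) => V) V)
    (W₁ W₂ : Submodule 𝔽 V) : Prop :=
  ∀ k₁ k₂ : Fin (m + 1), k₁ ≠ k₂ →
    ∀ v : Fin (m + 1) → V, v k₁ ∈ W₁ → v k₂ ∈ W₂ → f v = 0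

/-- A subspace `W` is strongly `f`-invariant: `f(V,…,W,…,V) ⊆ W` for every slot. -/
def StronglyInvariant (f : MultilinearMap 𝔽 (fun _ : Fin (m + 1) => V) V)
    (W : Submodule 𝔽 V) : Prop :=
  ∀ (k : Fin (m + 1)) (v : Fin (m + 1) → V), v k ∈ W → f v ∈ W

/-- `V_{[e i]}`, the span of the connection class of `e i`. -/
def classSpan (b : Module.Basis I 𝔽 V) (f : MultilinearMap 𝔽 (fun _ : Fin (m + 1) => V) V)
    (i : I) : Submodule 𝔽 V :=
  Submodule.span 𝔽 (⇑b '' {j | Connected b f i j})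

/-- The projection `Π_{V_{[e c]}} : V → V_{[e c]}` relative to the decomposition
`V = ⊕ V_{[e i]}` (expressed through basis coordinates). -/
def projClass (b : Module.Basis I 𝔽 V) (f : MultilinearMap 𝔽 (fun _ : Fin (m + 1) => V) V)
    (c : I) : V →ₗ[𝔽] V :=
  b.constr 𝔽 fun j => if Connected b f c j then b j else 0

/-- One step of the relation `≈`: the sum over `k₁ < k₂` of
`Π_{V_{[c]}}(f(V,…,V_{[d]},…,V_{[d]},…,V)) + Π_{V_{[d]}}(f(V,…,V_{[c]},…,V_{[c]},…,V))`
is nonzero. -/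
def ApproxStep (b : Module.Basis I 𝔽 V) (f : MultilinearMap 𝔽 (fun _ : Fin (m + 1) => V) V)
    (c d : I) : Prop :=
  ∃ k₁ k₂ : Fin (m + 1), k₁ < k₂ ∧
    ((∃ v : Fin (m + 1) → V, v k₁ ∈ classSpan b f d ∧ v k₂ ∈ classSpan b f d ∧
        projClass b f c (f v) ≠ 0) ∨
     (∃ v : Fin (m + 1) → V, v k₁ ∈ classSpan b f c ∧ v k₂ ∈ classSpan b f c ∧
        projClass b f d (f v) ≠ 0))

/-- `V_{[e i]} ≈ V_{[e j]}`: either they coincide (same connection class) or they are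
linked by a finite chain of classes with nonvanishing projection sums. -/
def Approx (b : Module.Basis I 𝔽 V) (f : MultilinearMap 𝔽 (fun _ : Fin (m + 1) => V) V)
    (i j : I) : Prop :=
  Relation.ReflTransGen (fun c d => Connected b f c d ∨ ApproxStep b f c d) i j

/-- `⌢V_{[e i]} = ⊕_{V_{[e j]} ∈ [V_{[e i]}]} V_{[e j]}`. -/
def hatSpan (b : Module.Basis I 𝔽 V) (f : MultilinearMap 𝔽 (fun _ : Fin (m + 1) => V) V)
    (i : I) : Submodule 𝔽 V :=
  Submodule.span 𝔽 (⇑b '' {j | Approx b f i j})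

/-- Two decompositions of `V` as `f`-orthogonal direct sums of strongly `f`-invariant
subspaces (given as the sets of their summands) are isomorphic: there is a linear
automorphism `h` of `V` commuting with `f` carrying the summands of the first
bijectively onto the summands of the second. -/
def IsoDecomp (f : MultilinearMap 𝔽 (fun _ : Fin (m + 1) => V) V)
    (S T : Set (Submodule 𝔽 V)) : Prop :=
  ∃ h : V ≃ₗ[𝔽] V,
    (∀ v : Fin (m + 1) → V, f (fun k => h (v k)) = h (f v)) ∧
    (Submodule.map (h : V →ₗ[𝔽] V)) '' S = T

/-- `X` is a strongly `f'`-invariant subspace of `W`, where `f'` is the restriction of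
`f` to `W`: `f(W,…,X,…,W) ⊆ X` for every slot. -/
def SInvIn (f : MultilinearMap 𝔽 (fun _ : Fin (m + 1) => V) V)
    (W X : Submodule 𝔽 V) : Prop :=
  ∀ (k : Fin (m + 1)) (v : Fin (m + 1) → V), (∀ t, v t ∈ W) → v k ∈ X → f v ∈ X

/-- `W` is `f'`-simple, `f'` being the restriction of `f` to `W`: the restricted map is
nonzero and the only strongly `f'`-invariant subspaces of `W` are `0` and `W`. -/
def SimpleIn (f : MultilinearMap 𝔽 (fun _ : Fin (m + 1) => V) V)
    (W : Submodule 𝔽 V) : Prop :=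
  (∃ v : Fin (m + 1) → V, (∀ t, v t ∈ W) ∧ f v ≠ 0) ∧
  ∀ X : Submodule 𝔽 V, X ≤ W → SInvIn f W X → X = ⊥ ∨ X = W

/-- The annihilator of the restriction `f'` of `f` to `W`. -/
def annIn (f : MultilinearMap 𝔽 (fun _ : Fin (m + 1) => V) V)
    (W : Submodule 𝔽 V) : Set V :=
  {w | w ∈ W ∧ ∀ (k : Fin (m + 1)) (v : Fin (m + 1) → V),
    (∀ t, v t ∈ W) → v k = w → f v = 0}

/-- `𝓘(w)`: the smallest strongly `f'`-invariant subspace of `W` containing `w`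
(equivalently, the ideal of `(W, f')` generated by `w`). -/
def idealGenIn (f : MultilinearMap 𝔽 (fun _ : Fin (m + 1) => V) V)
    (W : Submodule 𝔽 V) (w : V) : Submodule 𝔽 V :=
  sInf {X : Submodule 𝔽 V | X ≤ W ∧ SInvIn f W X ∧ w ∈ X}

/-- `S` is an `i`-division basis of `W` with respect to the restriction `f'` of `f`:
whenever `c ∈ S`, `b₁, …, b_{n-1} ∈ W` and `f'(b₁,…,c,…,b_{n-1}) = w ≠ 0` with `c` in
some slot `k`, then `c, b₁, …, b_{n-1} ∈ 𝓘(w)`. -/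
def IDivisionBasisIn (f : MultilinearMap 𝔽 (fun _ : Fin (m + 1) => V) V)
    (W : Submodule 𝔽 V) (S : Set V) : Prop :=
  ∀ c ∈ S, ∀ (k : Fin (m + 1)) (v : Fin (m + 1) → V),
    (∀ t, v t ∈ W) → v k = c → f v ≠ 0 → ∀ t, v t ∈ idealGenIn f W (f v)

/-! A step `w ∈ F({u}, ξ)` says that `w = f(…, u, …)` with the other arguments the basis
vectors named by `ξ`, which is exactly the step `u ∈ F({w}, ξ̄)` read backwards. Since `F`
acts elementwise on its set argument, a chain `u = v₀ → v₁ → ⋯ → v_m = w` of such steps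
along `X₁, …, X_m` reverses to a chain `w → ⋯ → u` along `X̄_m, …, X̄₁`. -/

section

variable (b : Module.Basis I 𝔽 V) (f : MultilinearMap 𝔽 (fun _ : Fin (m + 1) => V) V)

lemma mem_Fmap_iff (U : Set (Vstar V)) (ξ : Fin m → BSym I) (w : Vstar V) :
    w ∈ Fmap b f U ξ ↔ ∃ u ∈ U, w ∈ Fmap b f {u} ξ := by
  unfold Fmap
  split_ifs <;> aesop

lemma mem_Fmap_singleton_comm (hm : 1 ≤ m) (u w : Vstar V) (ξ : Fin m → BSym I) :
    w ∈ Fmap b f {u} ξ ↔ u ∈ Fmap b f {w} (fun t => barSwap (ξ t)) := by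
  have hmixed : ¬ ((∀ t, (ξ t).1 = false) ∧ ∀ t, (ξ t).1 = true) := fun h => by
    simpa [h.2 ⟨0, hm⟩] using h.1 ⟨0, hm⟩
  simp only [Fmap, barSwap, Bool.not_eq_eq_eq_not, Bool.not_false, Bool.not_true]
  split_ifs <;> simp_all

lemma iterF_append (U : Set (Vstar V)) (X Y : List (Fin m → BSym I)) :
    iterF b f U (X ++ Y) = iterF b f (iterF b f U X) Y := by
  induction X generalizing U with
  | nil => rfl
  | cons x X ih => exact ih _

lemma exists_mem_iterF_reverse_barSwap (hm : 1 ≤ m) (X : List (Fin m → BSym I))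
    (U : Set (Vstar V)) (w : Vstar V) (hw : w ∈ iterF b f U X) :
    ∃ u ∈ U, u ∈ iterF b f {w} ((X.map fun x => fun t => barSwap (x t)).reverse) := by
  induction X generalizing U with
  | nil => exact ⟨w, hw, rfl⟩
  | cons x X ih =>
    obtain ⟨v, hv, hwv⟩ := ih _ hw
    obtain ⟨u, hu, hvu⟩ := (mem_Fmap_iff b f U x v).1 hv
    refine ⟨u, hu, ?_⟩
    rw [List.map_cons, List.reverse_cons, iterF_append]
    exact (mem_Fmap_iff b f _ _ u).2 ⟨v, hwv, (mem_Fmap_singleton_comm b f hm u v x).1 hvu⟩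

end

theorem stmt3_general (hm : 1 ≤ m) (b : Module.Basis I 𝔽 V)
    (f : MultilinearMap 𝔽 (fun _ : Fin (m + 1) => V) V)
    (i j : I) (X : List (Fin m → BSym I))
    (h : IsConnection b f i j X) :
    IsConnection b f j i ((X.map fun x => fun t => barSwap (x t)).reverse) := by
  obtain ⟨hX, hj⟩ := h
  obtain ⟨u, hu, hi⟩ := exists_mem_iterF_reverse_barSwap b f hm X _ _ hj
  rw [Set.mem_singleton_iff.1 hu] at hi
  exact ⟨by simpa using hX, hi⟩

/-- Lemma: reversed bar-swapped connections. -/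
theorem stmt3 (hm : 1 ≤ m) (b : Module.Basis I 𝔽 V)
    (f : MultilinearMap 𝔽 (fun _ : Fin (m + 1) => V) V)
    (i j : I) (hij : b i ≠ b j) (X : List (Fin m → BSym I))
    (h : IsConnection b f i j X) :
    IsConnection b f j i ((X.map fun x => fun t => barSwap (x t)).reverse) :=
  stmt3_general hm b f i j X h
end
end

section
/- Let V be a vector space over a field 𝔽, n ≥ 2, f an n-linear map on V, and ℬ a basis of V. The relation ∼ on ℬ defined by e_i ∼ e_j if and only if e_i is connected to e_j is an equivalence relation. -/
/- Common setting: `V` is a vector space over a field `𝔽`, and `f` is an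
`n`-linear map on `V` where `n = m + 1 ≥ 2` (i.e. `1 ≤ m`).  Tuples of
length `n - 1 = m` index the last arguments of the set-valued map `F`. -/

open scoped Classical

noncomputable section

variable {𝔽 V I : Type*}

variable [Field 𝔽] [AddCommGroup V] [Module 𝔽 V] {m : ℕ}

/-!
Read forwards, a connection `X` from `e i` to `e j` pushes `e i` through the maps `F(·, ξ)`;
putting bars on every symbol turns each such image into a preimage, so the barred list read
backwards leads from `e j` to `e i`. Concatenating lists composes connections.
-/

section

variable (b : Module.Basis I 𝔽 V) (f : MultilinearMap 𝔽 (fun _ : Fin (m + 1) => V) V)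

lemma Fmap_mono {U U' : Set (Vstar V)} (h : U ⊆ U') (ξ : Fin m → BSym I) :
    Fmap b f U ξ ⊆ Fmap b f U' ξ := by
  unfold Fmap
  split_ifs
  · exact fun _ ⟨k, σ, u, hu, hfu⟩ => ⟨k, σ, u, h hu, hfu⟩
  · exact fun _ ⟨k, σ, u, hu, hfu⟩ => ⟨k, σ, u, h hu, hfu⟩
  · exact subset_rfl

lemma iterF_mono {U U' : Set (Vstar V)} (h : U ⊆ U') (X : List (Fin m → BSym I)) :
    iterF b f U X ⊆ iterF b f U' X := by
  induction X generalizing U U' with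
  | nil => exact h
  | cons ξ X ih => exact ih (Fmap_mono b f h ξ)

lemma exists_mem_Fmap_barSwap (hm : 1 ≤ m) {U : Set (Vstar V)} {ξ : Fin m → BSym I}
    {w : Vstar V} (hw : w ∈ Fmap b f U ξ) : ∃ u ∈ U, u ∈ Fmap b f {w} (barSwap ∘ ξ) := by
  -- `m ≥ 1` keeps the all-unbarred and all-barred cases of `Fmap` apart.
  have t₀ : Fin m := ⟨0, hm⟩
  unfold Fmap at hw ⊢
  split_ifs at hw with hunbarred hbarred
  · obtain ⟨k, σ, u, hu, hfu⟩ := hw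
    rw [if_neg fun h => by simpa [barSwap, hunbarred t₀] using h t₀,
      if_pos fun t => by simp [barSwap, hunbarred t]]
    exact ⟨u, hu, k, σ, w, rfl, hfu⟩
  · obtain ⟨k, σ, u, hu, hfw⟩ := hw
    rw [if_pos fun t => by simp [barSwap, hbarred t]]
    exact ⟨u, hu, k, σ, w, rfl, hfw⟩
  · exact absurd hw (Set.notMem_empty w)

lemma exists_mem_iterF_reverse (hm : 1 ≤ m) {U : Set (Vstar V)} {X : List (Fin m → BSym I)}
    {w : Vstar V} (hw : w ∈ iterF b f U X) :
    ∃ u ∈ U, u ∈ iterF b f {w} (X.reverse.map (barSwap ∘ ·)) := by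
  induction X generalizing U with
  | nil => exact ⟨w, hw, rfl⟩
  | cons ξ X ih =>
    obtain ⟨u', hu', hwu'⟩ := ih hw
    obtain ⟨u, hu, hu'u⟩ := exists_mem_Fmap_barSwap b f hm hu'
    refine ⟨u, hu, ?_⟩
    rw [List.reverse_cons, List.map_append, iterF_append]
    exact Fmap_mono b f (Set.singleton_subset_iff.2 hwu') _ hu'u

variable {b f}

lemma IsConnection.trans {i j k : I} {X Y : List (Fin m → BSym I)}
    (hX : IsConnection b f i j X) (hY : IsConnection b f j k Y) :
    IsConnection b f i k (X ++ Y) := by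
  refine ⟨by simp [hX.1], ?_⟩
  rw [iterF_append]
  exact iterF_mono b f (Set.singleton_subset_iff.2 hX.2) Y hY.2

lemma IsConnection.reverse (hm : 1 ≤ m) {i j : I} {X : List (Fin m → BSym I)}
    (hX : IsConnection b f i j X) :
    IsConnection b f j i (X.reverse.map (barSwap ∘ ·)) := by
  obtain ⟨u, hu, hju⟩ := exists_mem_iterF_reverse b f hm hX.2
  rw [Set.mem_singleton_iff.1 hu] at hju
  exact ⟨by simpa using hX.1, hju⟩

end

/-- connectedness is an equivalence relation on `ℬ`. -/
theorem stmt4 (hm : 1 ≤ m) (b : Module.Basis I 𝔽 V)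
    (f : MultilinearMap 𝔽 (fun _ : Fin (m + 1) => V) V) :
    Equivalence (Connected b f) := by
  refine ⟨fun _ => Or.inl rfl, ?symm, ?trans⟩
  case symm =>
    rintro i j (rfl | ⟨_, hX⟩)
    exacts [Or.inl rfl, Or.inr ⟨_, hX.reverse hm⟩]
  case trans =>
    rintro i j k (rfl | ⟨_, hX⟩) (rfl | ⟨_, hY⟩)
    exacts [Or.inl rfl, Or.inr ⟨_, hY⟩, Or.inr ⟨_, hX⟩, Or.inr ⟨_, hX.trans hY⟩]
end
end

section
/- Let V be a vector space over a field 𝔽, n ≥ 2, f an n-linear map on V, and ℬ a basis of V. For every class [V_{[e_i]}] ∈ ℱ/≈, the subspace ⌢V_{[e_i]} := ⊕_{V_{[e_j]} ∈ [V_{[e_i]}]} V_{[e_j]} is a strongly f-invariant linear subspace of V, i.e. f(V, …, ⌢V_{[e_i]} in slot j, …, V) ⊆ ⌢V_{[e_i]} for all j ∈ {1,…,n}. -/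
/- Common setting: `V` is a vector space over a field `𝔽`, and `f` is an
`n`-linear map on `V` where `n = m + 1 ≥ 2` (i.e. `1 ≤ m`).  Tuples of
length `n - 1 = m` index the last arguments of the set-valued map `F`. -/

open scoped Classical

noncomputable section

variable {𝔽 V I : Type*}

variable [Field 𝔽] [AddCommGroup V] [Module 𝔽 V] {m : ℕ}

/-! By multilinearity it suffices to show `w := f (e_{a 0}, …, e_{a m}) ∈ ⌢V_{[e i]}` when
`e_{a k} ∈ ⌢V_{[e i]}`. If `w ≠ 0`, then `F` carries `e_{a k}` to `w` along the unbarred tuple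
of the other arguments and carries `w` back to any `e_{a t}` along the barred one, so all the
`e_{a t}` lie in the class of `e_{a k}`. Hence for every `e_l` in the support of `w`, the
`V_{[e_l]}`-component of `f (V_{[e_{a k}]}, V_{[e_{a k}]}, V, …, V)` is nonzero, which is a
step `V_{[e_{a k}]} ≈ V_{[e_l]}`. -/

theorem MultilinearMap.apply_mem_of_forall_basis {R M N ι J : Type*} [CommSemiring R]
    [AddCommMonoid M] [Module R M] [AddCommMonoid N] [Module R N] [Fintype ι]
    (f : MultilinearMap R (fun _ : ι => M) N) (b : Module.Basis J R M) {W : Submodule R N}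
    {S : Set J} {k : ι} (h : ∀ a : ι → J, a k ∈ S → f (fun t => b (a t)) ∈ W)
    {v : ι → M} (hv : v k ∈ Submodule.span R (b '' S)) : f v ∈ W := by
  have hexpand : v = fun t => ∑ j ∈ (b.repr (v t)).support, b.repr (v t) j • b j :=
    funext fun t => (b.linearCombination_repr (v t)).symm
  rw [hexpand, f.map_sum_finset]
  refine Submodule.sum_mem _ fun a ha => ?_
  rw [f.map_smul_univ (fun t => b.repr (v t) (a t)) (fun t => b (a t))]
  exact Submodule.smul_mem _ _ (h a (b.mem_span_image.1 hv (Fintype.mem_piFinset.1 ha k)))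

section

variable (b : Module.Basis I 𝔽 V) (f : MultilinearMap 𝔽 (fun _ : Fin (m + 1) => V) V)

theorem connected_of_apply_basis_ne_zero (hm : 1 ≤ m) {a : Fin (m + 1) → I}
    (hf : f (fun s => b (a s)) ≠ 0) (k t : Fin (m + 1)) : Connected b f (a k) (a t) := by
  have hins (k : Fin (m + 1)) :
      (Fin.insertNth k (b (a k)) fun s => b (a (k.succAbove s))) = fun s => b (a s) :=
    Fin.insertNth_self_removeNth k (fun s => b (a s))
  let w : Vstar V := ⟨_, hf⟩
  have hw : w ∈ Fmap b f {bstar b (a k)} fun s => (false, a (k.succAbove s)) := by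
    rw [Fmap, if_pos fun _ => rfl]
    exact ⟨k, 1, bstar b (a k), rfl, congrArg f (hins k)⟩
  refine Or.inr ⟨[fun s => (false, a (k.succAbove s)), fun s => (true, a (t.succAbove s))],
    List.cons_ne_nil _ _, ?_⟩
  show bstar b (a t) ∈ Fmap b f (Fmap b f {bstar b (a k)} _) _
  rw [Fmap, if_neg fun h => Bool.noConfusion (h ⟨0, hm⟩), if_pos fun _ => rfl]
  exact ⟨t, 1, w, hw, congrArg f (hins t)⟩

theorem repr_projClass_self (c : I) (x : V) :
    b.repr (projClass b f c x) c = b.repr x c := by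
  rw [projClass, Module.Basis.constr_apply, map_finsuppSum, Finsupp.sum_apply,
    Finsupp.sum_eq_single c]
  · simp [show Connected b f c c from Or.inl rfl]
  · intro j _ hj
    split_ifs <;> simp [hj]
  · simp

theorem approxStep_of_repr_apply_basis_ne_zero (hm : 1 ≤ m) {a : Fin (m + 1) → I}
    {l : I} (hl : b.repr (f fun s => b (a s)) l ≠ 0) (k : Fin (m + 1)) :
    ApproxStep b f (a k) l := by
  have hf : f (fun s => b (a s)) ≠ 0 := fun h => hl (by simp [h])
  have hmem (t : Fin (m + 1)) : b (a t) ∈ classSpan b f (a k) :=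
    Submodule.subset_span ⟨a t, connected_of_apply_basis_ne_zero b f hm hf k t, rfl⟩
  refine ⟨⟨0, by omega⟩, ⟨1, by omega⟩, Fin.mk_lt_mk.2 Nat.zero_lt_one,
    Or.inr ⟨fun s => b (a s), hmem _, hmem _, fun h0 => hl ?_⟩⟩
  rw [← repr_projClass_self b f l, h0, map_zero, Finsupp.zero_apply]

theorem apply_basis_mem_hatSpan (hm : 1 ≤ m) (i : I) {a : Fin (m + 1) → I} {k : Fin (m + 1)}
    (ha : Approx b f i (a k)) : f (fun s => b (a s)) ∈ hatSpan b f i :=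
  b.mem_span_image.2 fun _ hl => ha.tail <| Or.inr <|
    approxStep_of_repr_apply_basis_ne_zero b f hm (Finsupp.mem_support_iff.1 hl) k

end

/-- each `⌢V_{[e i]}` is strongly `f`-invariant. -/
theorem stmt7 (hm : 1 ≤ m) (b : Module.Basis I 𝔽 V)
    (f : MultilinearMap 𝔽 (fun _ : Fin (m + 1) => V) V) (i : I) :
    StronglyInvariant f (hatSpan b f i) := fun _ _ hv =>
  f.apply_mem_of_forall_basis b (fun _ ha => apply_basis_mem_hatSpan b f hm i ha) hv
end
end

section
/- Let V be a vector space over a field 𝔽, n ≥ 2, f an n-linear map on V, ℬ a basis of V, and g : V → V a linear isomorphism satisfying f(g(ξ₁),…,g(ξ_n)) = g(f(ξ₁,…,ξ_n)) for all ξ₁,…,ξ_n ∈ ℬ. Then for every U ∈ 𝒫(V*) and all ξ₁,…,ξ_{n-1} ∈ ℬ one has g(F(U, ξ₁,…,ξ_{n-1})) = F′(g(U), g(ξ₁),…,g(ξ_{n-1})), where F′ is the map defined in the same way from f and the basis ℬ′ = {g(e_i) : e_i ∈ ℬ} and g(U) denotes the image set of U under g. -/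
/- Common setting: `V` is a vector space over a field `𝔽`, and `f` is an
`n`-linear map on `V` where `n = m + 1 ≥ 2` (i.e. `1 ≤ m`).  Tuples of
length `n - 1 = m` index the last arguments of the set-valued map `F`. -/

open scoped Classical

noncomputable section

variable {𝔽 V I : Type*}

variable [Field 𝔽] [AddCommGroup V] [Module 𝔽 V] {m : ℕ}

theorem MultilinearMap.comp_linearMap_eq_of_basis {R M ι κ : Type*} [CommSemiring R]
    [AddCommMonoid M] [Module R M] [Finite ι] (b : Module.Basis κ R M) (f : MultilinearMap R (fun _ : ι => M) M)
    (g : M →ₗ[R] M) (hg : ∀ ξ : ι → κ, f (fun k => g (b (ξ k))) = g (f (fun k => b (ξ k))))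
    (v : ι → M) : f (fun k => g (v k)) = g (f v) := by
  have h : f.compLinearMap (fun _ => g) = g.compMultilinearMap f :=
    Module.Basis.ext_multilinear (fun _ => b) hg
  exact DFunLike.congr_fun h v

theorem Fin.comp_insertNth {α β : Type*} {n : ℕ} (g : α → β) (k : Fin (n + 1)) (x : α)
    (p : Fin n → α) :
    (fun s => g (Fin.insertNth (α := fun _ => α) k x p s)) =
      Fin.insertNth (α := fun _ => β) k (g x) (fun t => g (p t)) := by
  ext s
  cases s using Fin.succAboveCases k <;> simp

theorem Fmap_unbarred (b : Module.Basis I 𝔽 V)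
    (f : MultilinearMap 𝔽 (fun _ : Fin (m + 1) => V) V) (U : Set (Vstar V)) (ξ : Fin m → I) :
    Fmap b f U (fun t => (false, ξ t)) =
      {w | ∃ (k : Fin (m + 1)) (σ : Equiv.Perm (Fin m)), ∃ u ∈ U,
        f (Fin.insertNth k u.1 fun t => b (ξ (σ t))) = w.1} :=
  if_pos fun _ => rfl

/-- Lemma, unbarred case: `g(F(U,ξ₁,…,ξ_{n-1})) = F'(g(U),g(ξ₁),…,g(ξ_{n-1}))`. -/
theorem stmt10 (b : Module.Basis I 𝔽 V)
    (f : MultilinearMap 𝔽 (fun _ : Fin (m + 1) => V) V) (g : V ≃ₗ[𝔽] V)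
    (hg : ∀ ξ : Fin (m + 1) → I,
      f (fun k => g (b (ξ k))) = g (f (fun k => b (ξ k))))
    (U : Set (Vstar V)) (ξ : Fin m → I) :
    (fun u : Vstar V => (⟨g u.1, fun h0 => u.2 (g.injective (by rw [h0, map_zero]))⟩ : Vstar V)) ''
        Fmap b f U (fun t => (false, ξ t)) =
      Fmap (b.map g) f
        ((fun u : Vstar V => (⟨g u.1, fun h0 => u.2 (g.injective (by rw [h0, map_zero]))⟩ : Vstar V)) '' U)
        (fun t => (false, ξ t)) := by
  have hcomm : ∀ (k : Fin (m + 1)) (σ : Equiv.Perm (Fin m)) (u : V),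
      f (Fin.insertNth k (g u) fun t => b.map g (ξ (σ t))) =
        g (f (Fin.insertNth k u fun t => b (ξ (σ t)))) := by
    intro k σ u
    simp only [Module.Basis.map_apply, ← Fin.comp_insertNth]
    exact f.comp_linearMap_eq_of_basis b g.toLinearMap hg _
  rw [Fmap_unbarred, Fmap_unbarred]
  ext w
  constructor
  · rintro ⟨v, ⟨k, σ, u, hu, hv⟩, rfl⟩
    exact ⟨k, σ, _, ⟨u, hu, rfl⟩, by rw [hcomm, hv]⟩
  · rintro ⟨k, σ, _, ⟨u, hu, rfl⟩, hw⟩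
    rw [hcomm] at hw
    have hne : f (Fin.insertNth k u.1 fun t => b (ξ (σ t))) ≠ 0 := by
      rintro h0
      exact w.2 (by rw [← hw, h0, map_zero])
    exact ⟨⟨_, hne⟩, ⟨k, σ, u, hu, rfl⟩, Subtype.ext hw⟩
end
end

section
/- Let V be a vector space over a field 𝔽, n ≥ 2, f an n-linear map on V, and ℬ a basis of V, and let W := ⌢V_{[e_i]} be one of the components of the decomposition V = ⊕ ⌢V_{[e_i]} given by the decomposition theorem. Let f′ : W × … × W → W be the restriction of f (well defined since W is strongly f-invariant) and ℬ′ := ℬ ∩ W. Then W is f′-simple if and only if Ann(f′) = 0 and ℬ′ is an i-division basis of W with respect to f′. -/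
/- Common setting: `V` is a vector space over a field `𝔽`, and `f` is an
`n`-linear map on `V` where `n = m + 1 ≥ 2` (i.e. `1 ≤ m`).  Tuples of
length `n - 1 = m` index the last arguments of the set-valued map `F`. -/

open scoped Classical

noncomputable section

variable {𝔽 V I : Type*}

variable [Field 𝔽] [AddCommGroup V] [Module 𝔽 V] {m : ℕ}

/-!
Simplicity gives `Ann(f') = 0` because the annihilator is a strongly invariant subspace on
which `f'` vanishes, and the `i`-division property because every ideal `𝓘(w)` with `w ≠ 0`
is all of `W`. Conversely, let `X ≠ 0` be strongly invariant and `0 ≠ x ∈ X`. Since `x` is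
not annihilated, `f'(…, x, …) ≠ 0` for suitable arguments in `W`; expanding another
argument in the basis and using multilinearity, that argument may be taken to be a basis
vector `e` of `W`. Then `e ∈ 𝓘(f'(…, x, …, e, …)) ⊆ X`. Repeating the argument with `e` in
place of `x` and an arbitrary `y ∈ W` (or `y` plus the displaced argument, when the value
with `y` vanishes) in another slot gives `y ∈ X`.
-/

theorem MultilinearMap.exists_mem_support_update_ne_zero {R M N ι I : Type*} [CommSemiring R]
    [AddCommMonoid M] [Module R M] [AddCommMonoid N] [Module R N] [DecidableEq ι]
    (f : MultilinearMap R (fun _ : ι => M) N) (b : Module.Basis I R M) {v : ι → M}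
    (hv : f v ≠ 0) (t : ι) :
    ∃ j ∈ (b.repr (v t)).support, f (Function.update v t (b j)) ≠ 0 := by
  by_contra! h
  have hker : Submodule.span R (b '' (b.repr (v t)).support) ≤
      LinearMap.ker (f.toLinearMap v t) :=
    Submodule.span_le.mpr <| by
      rintro _ ⟨j, hj, rfl⟩
      simpa using h j hj
  exact hv (by simpa using hker (b.mem_span_repr_support (v t)))

section Restriction

variable {f : MultilinearMap 𝔽 (fun _ : Fin (m + 1) => V) V} {W X : Submodule 𝔽 V}

theorem forall_update_mem {v : Fin (m + 1) → V} (hv : ∀ s, v s ∈ W) (t : Fin (m + 1)) {z : V}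
    (hz : z ∈ W) (s : Fin (m + 1)) : Function.update v t z s ∈ W := by
  rcases eq_or_ne s t with rfl | hst
  · simpa using hz
  · simpa [hst] using hv s

theorem idealGenIn_le {w : V} (hXW : X ≤ W) (hX : SInvIn f W X) (hw : w ∈ X) :
    idealGenIn f W w ≤ X :=
  sInf_le ⟨hXW, hX, hw⟩

theorem SimpleIn.le_idealGenIn (hW : SimpleIn f W) {w : V} (hw : w ≠ 0) :
    W ≤ idealGenIn f W w :=
  le_sInf fun X ⟨hXW, hX, hwX⟩ =>
    ((hW.2 X hXW hX).resolve_left fun h => hw ((Submodule.mem_bot 𝔽).mp (h ▸ hwX))).ge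

theorem SimpleIn.iDivisionBasisIn (hW : SimpleIn f W) (S : Set V) : IDivisionBasisIn f W S :=
  fun _ _ _ _ hv _ hfv t => hW.le_idealGenIn hfv (hv t)

theorem mem_annIn_iff_update {w : V} :
    w ∈ annIn f W ↔
      w ∈ W ∧ ∀ (k : Fin (m + 1)) (v : Fin (m + 1) → V),
        (∀ t, v t ∈ W) → f (Function.update v k w) = 0 := by
  refine ⟨fun ⟨hwW, hw⟩ => ⟨hwW, fun k v hv => ?_⟩, fun ⟨hwW, hw⟩ => ⟨hwW, fun k v hv hvk => ?_⟩⟩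
  · exact hw k _ (forall_update_mem hv k hwW) (Function.update_self k w v)
  · simpa [← hvk] using hw k v hv

variable (f W) in
def annSubmodule : Submodule 𝔽 V where
  carrier := annIn f W
  zero_mem' := mem_annIn_iff_update.mpr ⟨W.zero_mem, fun k v _ => f.map_update_zero v k⟩
  add_mem' {a c} ha hc := by
    obtain ⟨haW, ha⟩ := mem_annIn_iff_update.mp ha
    obtain ⟨hcW, hc⟩ := mem_annIn_iff_update.mp hc
    refine mem_annIn_iff_update.mpr ⟨W.add_mem haW hcW, fun k v hv => ?_⟩
    rw [f.map_update_add, ha k v hv, hc k v hv, add_zero]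
  smul_mem' r a ha := by
    obtain ⟨haW, ha⟩ := mem_annIn_iff_update.mp ha
    refine mem_annIn_iff_update.mpr ⟨W.smul_mem r haW, fun k v hv => ?_⟩
    rw [f.map_update_smul, ha k v hv, smul_zero]

theorem sInvIn_annSubmodule : SInvIn f W (annSubmodule f W) :=
  fun k v hv hvk => by
    rw [hvk.2 k v hv rfl]
    exact (annSubmodule f W).zero_mem

theorem SimpleIn.annIn_eq (hW : SimpleIn f W) : annIn f W = {0} := by
  obtain ⟨⟨v, hv, hfv⟩, hmin⟩ := hW
  rcases hmin (annSubmodule f W) (fun _ h => h.1) sInvIn_annSubmodule with h | h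
  · exact (congrArg SetLike.coe h).trans Submodule.bot_coe
  · have hv₀ : v 0 ∈ annSubmodule f W := by rw [h]; exact hv 0
    exact absurd (hv₀.2 0 v hv rfl) hfv

theorem exists_apply_ne_zero_of_annIn_eq (hann : annIn f W = {0}) {x : V} (hxW : x ∈ W)
    (hx : x ≠ 0) :
    ∃ (k : Fin (m + 1)) (v : Fin (m + 1) → V), (∀ t, v t ∈ W) ∧ v k = x ∧ f v ≠ 0 := by
  by_contra! h
  have hxa : x ∈ annIn f W := ⟨hxW, h⟩
  exact hx (by simpa [hann] using hxa)

namespace IDivisionBasisIn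

variable {S : Set V}

theorem mem (hdiv : IDivisionBasisIn f W S) (hXW : X ≤ W) (hX : SInvIn f W X)
    {v : Fin (m + 1) → V} (hv : ∀ t, v t ∈ W) {k k' : Fin (m + 1)} (hvk : v k ∈ S)
    (hvk' : v k' ∈ X) (hfv : f v ≠ 0) (t : Fin (m + 1)) : v t ∈ X :=
  idealGenIn_le hXW hX (hX k' v hv hvk') (hdiv _ hvk k v hv rfl hfv t)

theorem le_of_mem (hm : 1 ≤ m) (hann : annIn f W = {0}) (hdiv : IDivisionBasisIn f W S)
    (hXW : X ≤ W) (hX : SInvIn f W X) {c : V} (hcS : c ∈ S) (hcX : c ∈ X) (hc : c ≠ 0) :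
    W ≤ X := by
  intro y hy
  obtain ⟨k, v, hv, rfl, hfv⟩ := exists_apply_ne_zero_of_annIn_eq hann (hXW hcX) hc
  have : Nontrivial (Fin (m + 1)) := Fin.nontrivial_iff_two_le.mpr (by omega)
  obtain ⟨t, htk⟩ := exists_ne k
  have hk : ∀ z, Function.update v t z k = v k := fun z => Function.update_of_ne htk.symm z v
  by_cases hzero : f (Function.update v t y) = 0
  · have hsum : f (Function.update v t (v t + y)) = f v := by
      rw [f.map_update_add, hzero, add_zero, Function.update_eq_self]
    have hvy := hdiv.mem hXW hX (forall_update_mem hv t (W.add_mem (hv t) hy))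
      ((hk _).symm ▸ hcS) ((hk _).symm ▸ hcX) (hsum ▸ hfv) t
    have hvt := hdiv.mem hXW hX hv hcS hcX hfv t
    simpa using X.sub_mem hvy hvt
  · simpa using hdiv.mem hXW hX (forall_update_mem hv t hy) ((hk _).symm ▸ hcS)
      ((hk _).symm ▸ hcX) hzero t

theorem exists_basis_mem (hm : 1 ≤ m) {b : Module.Basis I 𝔽 V} {s : Set I}
    (hWb : W = Submodule.span 𝔽 (b '' s)) (hann : annIn f W = {0})
    (hdiv : IDivisionBasisIn f W (Set.range b ∩ W)) (hXW : X ≤ W) (hX : SInvIn f W X)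
    (hX₀ : X ≠ ⊥) : ∃ j, b j ∈ X := by
  obtain ⟨x, hxX, hx⟩ := Submodule.exists_mem_ne_zero_of_ne_bot hX₀
  obtain ⟨k, v, hv, rfl, hfv⟩ := exists_apply_ne_zero_of_annIn_eq hann (hXW hxX) hx
  have : Nontrivial (Fin (m + 1)) := Fin.nontrivial_iff_two_le.mpr (by omega)
  obtain ⟨t, htk⟩ := exists_ne k
  obtain ⟨j, hj, hfu⟩ := f.exists_mem_support_update_ne_zero b hfv t
  have hbj : b j ∈ W := by
    have hsupp := b.mem_span_image.mp (hWb ▸ hv t)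
    exact hWb ▸ Submodule.subset_span ⟨j, hsupp hj, rfl⟩
  refine ⟨j, ?_⟩
  simpa using hdiv.mem hXW hX (forall_update_mem hv t hbj) (k := t) (k' := k) (by simpa using hbj)
    (by simpa [htk.symm] using hxX) hfu t

end IDivisionBasisIn

theorem simpleIn_iff_of_eq_span (hm : 1 ≤ m) {b : Module.Basis I 𝔽 V} {s : Set I}
    (hWb : W = Submodule.span 𝔽 (b '' s)) (hW₀ : W ≠ ⊥) :
    SimpleIn f W ↔ annIn f W = {0} ∧ IDivisionBasisIn f W (Set.range b ∩ W) := by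
  refine ⟨fun hW => ⟨hW.annIn_eq, hW.iDivisionBasisIn _⟩, fun ⟨hann, hdiv⟩ => ⟨?_, ?_⟩⟩
  · obtain ⟨x, hxW, hx⟩ := Submodule.exists_mem_ne_zero_of_ne_bot hW₀
    obtain ⟨_, v, hv, -, hfv⟩ := exists_apply_ne_zero_of_annIn_eq hann hxW hx
    exact ⟨v, hv, hfv⟩
  · intro X hXW hX
    refine or_iff_not_imp_left.mpr fun hX₀ => ?_
    obtain ⟨j, hj⟩ := hdiv.exists_basis_mem hm hWb hann hXW hX hX₀
    exact le_antisymm hXW (hdiv.le_of_mem hm hann hXW hX ⟨⟨j, rfl⟩, hXW hj⟩ hj (b.ne_zero j))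

end Restriction

/-- characterization of the `f'`-simplicity of the components. -/
theorem stmt15 (hm : 1 ≤ m) (b : Module.Basis I 𝔽 V)
    (f : MultilinearMap 𝔽 (fun _ : Fin (m + 1) => V) V) (i : I) :
    SimpleIn f (hatSpan b f i) ↔
      annIn f (hatSpan b f i) = {0} ∧
      IDivisionBasisIn f (hatSpan b f i)
        (Set.range ⇑b ∩ (hatSpan b f i : Set V)) :=
  simpleIn_iff_of_eq_span hm rfl <|
    (Submodule.ne_bot_iff _).mpr ⟨b i, Submodule.subset_span ⟨i, .refl, rfl⟩, b.ne_zero i⟩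
end
end
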